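/- Let (K,η,T) be a normal extension triple with semilattice decomposition K = ⋃_{e∈E(T)} K_e induced by η, and consider Houghton's wreath product K Wr^H T = P_{K,T}⋊T. Then the set P^η_{K,T} = {α ∈ P_{K,T} : α(x) ∈ K_{ran(x)} for every x ∈ dom α} forms an inverse subsemigroup of P_{K,T}; the restriction of the action of T on P_{K,T} to P^η_{K,T} is an action of T on P^η_{K,T} satisfying axiom (AFR) (with ε(α) the unique idempotent generator of dom α); and consequently the full restricted semidirect product P^η_{K,T}⋊T is an inverse subsemigroup of K Wr^H T. -/
import Mathlib


/-- An inverse semigroup: a semigroup in which every element `a` has a unique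
inverse `a⁻¹` satisfying `a * a⁻¹ * a = a` and `a⁻¹ * a * a⁻¹ = a⁻¹`. -/
class InverseSemigroup (S : Type*) extends Semigroup S, Inv S where
  mul_inv_mul : ∀ a : S, a * a⁻¹ * a = a
  inv_mul_inv : ∀ a : S, a⁻¹ * a * a⁻¹ = a⁻¹
  inv_unique : ∀ {a b : S}, a * b * a = a → b * a * b = b → b = a⁻¹

namespace InverseSemigroup

variable {S : Type*} [InverseSemigroup S]

lemma inv_inv' (a : S) : a⁻¹⁻¹ = a :=
  (inv_unique (inv_mul_inv a) (mul_inv_mul a)).symm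

lemma idem_inv {e : S} (he : e * e = e) : e⁻¹ = e :=
  (inv_unique (a := e) (b := e) (by rw [he, he]) (by rw [he, he])).symm

lemma fse_inv {e f : S} (he : e * e = e) (hf : f * f = f) :
    f * (e * f)⁻¹ * e = (e * f)⁻¹ := by
  have he' : ∀ x : S, e * (e * x) = e * x := fun x => by rw [← mul_assoc, he]
  have hf' : ∀ x : S, f * (f * x) = f * x := fun x => by rw [← mul_assoc, hf]
  have h4 : e * (f * ((e * f)⁻¹ * (e * f))) = e * f := by
    simpa only [mul_assoc] using mul_inv_mul (e * f)
  have h5 : (e * f)⁻¹ * (e * (f * (e * f)⁻¹)) = (e * f)⁻¹ := by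
    simpa only [mul_assoc] using inv_mul_inv (e * f)
  apply inv_unique (a := e * f)
  · simp only [mul_assoc]
    simp only [hf', he']
    exact h4
  · simp only [mul_assoc]
    simp only [he', hf']
    rw [show (e * f)⁻¹ * (e * (f * ((e * f)⁻¹ * e)))
        = ((e * f)⁻¹ * (e * (f * (e * f)⁻¹))) * e by simp only [mul_assoc], h5]

lemma idem_mul_idem {e f : S} (he : e * e = e) (hf : f * f = f) :
    (e * f) * (e * f) = e * f := by
  have hs : (e * f)⁻¹ = f * (e * f)⁻¹ * e := (fse_inv he hf).symm
  have h6 : (e * f)⁻¹ * ((e * f) * ((e * f)⁻¹ * e)) = (e * f)⁻¹ * e := by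
    rw [show (e * f)⁻¹ * ((e * f) * ((e * f)⁻¹ * e))
        = ((e * f)⁻¹ * (e * f) * (e * f)⁻¹) * e by simp only [mul_assoc],
      inv_mul_inv]
  have h1 : (e * f)⁻¹ * (e * f)⁻¹ = (e * f)⁻¹ := by
    calc (e * f)⁻¹ * (e * f)⁻¹
        = (f * (e * f)⁻¹ * e) * (f * (e * f)⁻¹ * e) := by rw [← hs]
      _ = f * ((e * f)⁻¹ * ((e * f) * ((e * f)⁻¹ * e))) := by
          simp only [mul_assoc]
      _ = f * ((e * f)⁻¹ * e) := by rw [h6]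
      _ = (e * f)⁻¹ := by rw [← mul_assoc]; exact fse_inv he hf
  have h4 : e * f = (e * f)⁻¹ := (inv_inv' (e * f)).symm.trans (idem_inv h1)
  calc (e * f) * (e * f) = (e * f)⁻¹ * (e * f)⁻¹ := by rw [← h4]
    _ = (e * f)⁻¹ := h1
    _ = e * f := h4.symm

lemma idem_comm {e f : S} (he : e * e = e) (hf : f * f = f) : e * f = f * e := by
  have he' : ∀ x : S, e * (e * x) = e * x := fun x => by rw [← mul_assoc, he]
  have hf' : ∀ x : S, f * (f * x) = f * x := fun x => by rw [← mul_assoc, hf]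
  have hef := idem_mul_idem he hf
  have hfe := idem_mul_idem hf he
  have h1 : f * e = (e * f)⁻¹ := by
    apply inv_unique
    · simp only [mul_assoc, hf', he']
      simpa only [mul_assoc] using hef
    · simp only [mul_assoc, he', hf']
      simpa only [mul_assoc] using hfe
  rw [h1, idem_inv hef]

lemma ran_idem (t : S) : (t * t⁻¹) * (t * t⁻¹) = t * t⁻¹ := by
  calc (t * t⁻¹) * (t * t⁻¹) = (t * t⁻¹ * t) * t⁻¹ := by simp only [mul_assoc]
    _ = t * t⁻¹ := by rw [mul_inv_mul]

lemma dom_idem (t : S) : (t⁻¹ * t) * (t⁻¹ * t) = t⁻¹ * t := by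
  calc (t⁻¹ * t) * (t⁻¹ * t) = t⁻¹ * (t * t⁻¹ * t) := by simp only [mul_assoc]
    _ = t⁻¹ * t := by rw [mul_inv_mul]

lemma mul_inv_rev' (a b : S) : (a * b)⁻¹ = b⁻¹ * a⁻¹ := by
  symm
  apply inv_unique
  · calc a * b * (b⁻¹ * a⁻¹) * (a * b)
        = a * ((b * b⁻¹) * (a⁻¹ * a)) * b := by simp only [mul_assoc]
      _ = a * ((a⁻¹ * a) * (b * b⁻¹)) * b := by
          rw [idem_comm (ran_idem b) (dom_idem a)]
      _ = (a * a⁻¹ * a) * (b * b⁻¹ * b) := by simp only [mul_assoc]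
      _ = a * b := by rw [mul_inv_mul, mul_inv_mul]
  · calc b⁻¹ * a⁻¹ * (a * b) * (b⁻¹ * a⁻¹)
        = b⁻¹ * ((a⁻¹ * a) * (b * b⁻¹)) * a⁻¹ := by simp only [mul_assoc]
      _ = b⁻¹ * ((b * b⁻¹) * (a⁻¹ * a)) * a⁻¹ := by
          rw [idem_comm (dom_idem a) (ran_idem b)]
      _ = (b⁻¹ * b * b⁻¹) * (a⁻¹ * a * a⁻¹) := by simp only [mul_assoc]
      _ = b⁻¹ * a⁻¹ := by rw [inv_mul_inv, inv_mul_inv]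

lemma conj_idem {e : S} (he : e * e = e) (t : S) :
    (t * e * t⁻¹) * (t * e * t⁻¹) = t * e * t⁻¹ := by
  have h1 : e * (t⁻¹ * t) = t⁻¹ * t * e := idem_comm he (dom_idem t)
  calc (t * e * t⁻¹) * (t * e * t⁻¹)
      = t * ((e * (t⁻¹ * t)) * (e * t⁻¹)) := by simp only [mul_assoc]
    _ = t * ((t⁻¹ * t * e) * (e * t⁻¹)) := by rw [h1]
    _ = (t * t⁻¹ * t) * ((e * e) * t⁻¹) := by simp only [mul_assoc]
    _ = t * e * t⁻¹ := by rw [mul_inv_mul, he, mul_assoc]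

lemma mem_of_mem_mul_left {e f x : S} (he : e * e = e) (hf : f * f = f)
    (h : x * (e * f) = x) : x * e = x := by
  conv_lhs => rw [← h]
  calc x * (e * f) * e = x * (e * (f * e)) := by simp only [mul_assoc]
    _ = x * (e * (e * f)) := by rw [idem_comm hf he]
    _ = x * (e * f) := by rw [← mul_assoc e e f, he]
    _ = x := h

lemma mem_of_mem_mul_right {e f x : S} (hf : f * f = f)
    (h : x * (e * f) = x) : x * f = x := by
  conv_lhs => rw [← h]
  calc x * (e * f) * f = x * (e * (f * f)) := by simp only [mul_assoc]
    _ = x * (e * f) := by rw [hf]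
    _ = x := h

lemma mem_mul_of_conj {e x : S} (he : e * e = e) (t : S)
    (h : x * (t * e * t⁻¹) = x) : (x * t) * e = x * t := by
  have h1 : x * t = x * (t * (e * (t⁻¹ * t))) := by
    conv_lhs => rw [← h]
    simp only [mul_assoc]
  calc (x * t) * e = x * (t * (e * (t⁻¹ * t))) * e := by rw [← h1]
    _ = x * (t * ((e * (t⁻¹ * t)) * e)) := by simp only [mul_assoc]
    _ = x * (t * ((t⁻¹ * t) * (e * e))) := by
        rw [idem_comm he (dom_idem t), mul_assoc]
    _ = x * (t * (e * (t⁻¹ * t))) := by rw [he, idem_comm (dom_idem t) he]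
    _ = x * t := h1.symm

end InverseSemigroup

/-- The set of idempotents `E(T)` of a `Mul`-structure. -/
def idemSet (T : Type*) [Mul T] : Set T := {e | e * e = e}

/-- `ran t = t * t⁻¹`. -/
def iran {T : Type*} [Mul T] [Inv T] (t : T) : T := t * t⁻¹

/-- `dom t = t⁻¹ * t`. -/
def idom {T : Type*} [Mul T] [Inv T] (t : T) : T := t⁻¹ * t

/-- The natural partial order: `a ≤ b` iff `a = e * b` for some idempotent `e`. -/
def nle {T : Type*} [Mul T] (a b : T) : Prop := ∃ e ∈ idemSet T, a = e * b

/-- `b` is an inverse of `a`. -/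
def IsInvPair {T : Type*} [Mul T] (a b : T) : Prop := a * b * a = a ∧ b * a * b = b

/-- An action of `T` on `K` by endomorphisms. -/
def IsAction {K T : Type*} [Mul K] [Mul T] (act : T → K → K) : Prop :=
  (∀ t a b, act t (a * b) = act t a * act t b) ∧
  (∀ t u a, act (t * u) a = act t (act u a))

/-- `ε : K → T` is a (surjective) homomorphism from `K` onto the semilattice
of idempotents `E(T)` of `T`. -/
def IsSurjHomOntoE {K T : Type*} [Mul K] [Mul T] (ε : K → T) : Prop :=
  (∀ a b, ε (a * b) = ε a * ε b) ∧ (∀ a, ε a ∈ idemSet T) ∧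
  (∀ e ∈ idemSet T, ∃ a, ε a = e)

/-- Condition (AFR): `e · a = a` iff `ε a ≤ e`, for all `a ∈ K`, `e ∈ E(T)`. -/
def AFR {K T : Type*} [Mul K] [Mul T] (act : T → K → K) (ε : K → T) : Prop :=
  ∀ (a : K), ∀ e ∈ idemSet T, (act e a = a ↔ nle (ε a) e)

/-- An element of `P_{K,T}`: a function from a principal left ideal of `T`
into `K`.  The ideal `T·gen = {x | x * gen = x}` is recorded by its unique
idempotent generator `gen`, and `val` is the function defined on it. -/
structure PElem (K T : Type*) [Mul T] where
  gen : T
  idem : gen * gen = gen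
  val : {x : T // x * gen = x} → K

namespace PElem

open InverseSemigroup

variable {K T : Type*} [InverseSemigroup T]

/-- The pointwise multiplication `α ⊕ β` of `P_{K,T}`, defined on
`dom α ∩ dom β = T(ef)` by `(α ⊕ β)(x) = α(x) β(x)`. -/
def pmul [Mul K] (α β : PElem K T) : PElem K T where
  gen := α.gen * β.gen
  idem := idem_mul_idem α.idem β.idem
  val := fun x =>
    α.val ⟨x.1, mem_of_mem_mul_left α.idem β.idem x.2⟩ *
    β.val ⟨x.1, mem_of_mem_mul_right β.idem x.2⟩

/-- The pointwise inverse on `P_{K,T}`. -/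
def pinv [Inv K] (α : PElem K T) : PElem K T where
  gen := α.gen
  idem := α.idem
  val := fun x => (α.val x)⁻¹

/-- The action of `T` on `P_{K,T}`: `t · α : (dom α)t⁻¹ → K, x ↦ α(xt)`;
the ideal `(dom α)t⁻¹` has idempotent generator `t * α.gen * t⁻¹`. -/
def pact (t : T) (α : PElem K T) : PElem K T where
  gen := t * α.gen * t⁻¹
  idem := conj_idem α.idem t
  val := fun x => α.val ⟨x.1 * t, mem_mul_of_conj α.idem t x.2⟩

end PElem

/-- The principal left ideal `Tt` of `T` (note `x ∈ Tt` iff `x = y * t` for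
some `y`). -/
def lIdeal (T : Type*) [Mul T] (t : T) : Set T := {x | ∃ y : T, x = y * t}

/-- The carrier of Houghton's wreath product `K Wr^H T`:
`{(α, t) ∈ P_{K,T} × T : dom α = T t⁻¹}`. -/
def hwrSet (K T : Type*) [InverseSemigroup T] : Set (PElem K T × T) :=
  {p | {x : T | x * p.1.gen = x} = lIdeal T p.2⁻¹}

/-- The multiplication of Houghton's wreath product:
`(α, t)(β, u) = (α ⊕ (t · β), tu)`. -/
def hwrMul {K T : Type*} [Mul K] [InverseSemigroup T]
    (p q : PElem K T × T) : PElem K T × T :=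
  (PElem.pmul p.1 (PElem.pact p.2 q.1), p.2 * q.2)

/-- The subset `P^η_{K,T} = {α ∈ P_{K,T} : α(x) ∈ K_{ran x} for all
`x ∈ dom α`}` determined by the normal extension triple `(K, η, T)`. -/
def Peta {K T : Type*} [Mul T] [Inv T] (η : K → T) : Set (PElem K T) :=
  {α | ∀ x : {x : T // x * α.gen = x}, η (α.val x) = iran x.1}

/-- The carrier of the full restricted semidirect product `P^η_{K,T} ⋊ T`
(Houghton's wreath product of `K` by `T` along `η`). -/
def hwrEtaSet {K T : Type*} [InverseSemigroup T] (η : K → T) :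
    Set (PElem K T × T) :=
  {p | p.1 ∈ Peta η ∧ p.1.gen = iran p.2}

section Aux

open InverseSemigroup

lemma PElem.ext' {K T : Type*} [Mul T] {α β : PElem K T} (h : α.gen = β.gen)
    (hv : ∀ (x : T) (hx : x * α.gen = x) (hx' : x * β.gen = x),
      α.val ⟨x, hx⟩ = β.val ⟨x, hx'⟩) : α = β := by
  obtain ⟨g, hg, v⟩ := α
  obtain ⟨g', hg', v'⟩ := β
  dsimp at h
  subst h
  simp only [PElem.mk.injEq, heq_eq_eq, true_and]
  funext x
  exact hv x.1 x.2 x.2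

variable {K T : Type*} [InverseSemigroup T]

lemma eta_inv [InverseSemigroup K] {η : K → T} (hη : IsSurjHomOntoE η) (a : K) :
    η a⁻¹ = η a := by
  have h1 : η a * η a⁻¹ * η a = η a := by
    rw [← hη.1, ← hη.1, mul_inv_mul]
  have h2 : η a⁻¹ * η a * η a⁻¹ = η a⁻¹ := by
    rw [← hη.1, ← hη.1, inv_mul_inv]
  rw [inv_unique h1 h2, idem_inv (hη.2.1 a)]

lemma pact_gen_eq [Mul K] (t : T) (α : PElem K T) :
    (PElem.pact t α).gen = t * α.gen * t⁻¹ := rfl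

lemma pact_pmul [Mul K] (t : T) (α β : PElem K T) :
    PElem.pact t (PElem.pmul α β) =
      PElem.pmul (PElem.pact t α) (PElem.pact t β) := by
  apply PElem.ext'
  · show t * (α.gen * β.gen) * t⁻¹ = t * α.gen * t⁻¹ * (t * β.gen * t⁻¹)
    have hcomm : (t⁻¹ * t) * β.gen = β.gen * (t⁻¹ * t) :=
      idem_comm (dom_idem t) β.idem
    symm
    calc t * α.gen * t⁻¹ * (t * β.gen * t⁻¹)
        = t * (α.gen * ((t⁻¹ * t) * β.gen * t⁻¹)) := by simp only [mul_assoc]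
      _ = t * (α.gen * (β.gen * (t⁻¹ * t * t⁻¹))) := by
          rw [hcomm]; simp only [mul_assoc]
      _ = t * (α.gen * (β.gen * t⁻¹)) := by rw [inv_mul_inv]
      _ = t * (α.gen * β.gen) * t⁻¹ := by simp only [mul_assoc]
  · intro x hx hx'
    rfl

lemma pact_mul [Mul K] (t u : T) (α : PElem K T) :
    PElem.pact (t * u) α = PElem.pact t (PElem.pact u α) := by
  apply PElem.ext'
  · show (t * u) * α.gen * (t * u)⁻¹ = t * (u * α.gen * u⁻¹) * t⁻¹
    rw [mul_inv_rev']
    simp only [mul_assoc]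
  · intro x hx hx'
    show α.val ⟨x * (t * u), _⟩ = α.val ⟨x * t * u, _⟩
    exact congrArg α.val (Subtype.ext (mul_assoc x t u).symm)

lemma pact_fix [Mul K] {e : T} (he : e * e = e) {α : PElem K T}
    (hge : α.gen * e = α.gen) : PElem.pact e α = α := by
  have hcomm : e * α.gen = α.gen * e := idem_comm he α.idem
  have hgen : e * α.gen * e⁻¹ = α.gen := by
    rw [idem_inv he, hcomm, mul_assoc, he, hge]
  apply PElem.ext'
  · exact hgen
  · intro x hx hx'
    have hxe : x * e = x := by
      conv_lhs => rw [← hx', mul_assoc, hge]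
      exact hx'
    exact congrArg α.val (Subtype.ext hxe)

lemma pmul_pinv_self [InverseSemigroup K] (α : PElem K T) :
    PElem.pmul (PElem.pmul α (PElem.pinv α)) α = α := by
  apply PElem.ext'
  · show α.gen * α.gen * α.gen = α.gen
    rw [α.idem, α.idem]
  · intro x hx hx'
    exact mul_inv_mul (α.val ⟨x, hx'⟩)

lemma pinv_pmul_self [InverseSemigroup K] (α : PElem K T) :
    PElem.pmul (PElem.pmul (PElem.pinv α) α) (PElem.pinv α) = PElem.pinv α := by
  apply PElem.ext'
  · show α.gen * α.gen * α.gen = α.gen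
    rw [α.idem, α.idem]
  · intro x hx hx'
    exact inv_mul_inv (α.val ⟨x, hx'⟩)

lemma peta_pmul [Mul K] {η : K → T} (hη : IsSurjHomOntoE η)
    {α β : PElem K T} (hα : α ∈ Peta η) (hβ : β ∈ Peta η) :
    PElem.pmul α β ∈ Peta η := by
  intro x
  show η (α.val _ * β.val _) = iran x.1
  rw [hη.1, hα _, hβ _]
  exact ran_idem x.1

lemma peta_pinv [InverseSemigroup K] {η : K → T} (hη : IsSurjHomOntoE η)
    {α : PElem K T} (hα : α ∈ Peta η) : PElem.pinv α ∈ Peta η := by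
  intro x
  show η (α.val x)⁻¹ = iran x.1
  rw [eta_inv hη, hα x]

lemma peta_pact [Mul K] {η : K → T} (hη : IsSurjHomOntoE η) (t : T)
    {α : PElem K T} (hα : α ∈ Peta η) : PElem.pact t α ∈ Peta η := by
  rintro ⟨x, hx⟩
  show η (α.val ⟨x * t, _⟩) = iran x
  rw [hα _]
  show (x * t) * (x * t)⁻¹ = x * x⁻¹
  have hxt : x * (t * t⁻¹) = x := by
    conv_lhs => rw [← hx]
    calc x * (t * α.gen * t⁻¹) * (t * t⁻¹)
        = x * (t * (α.gen * (t⁻¹ * t * t⁻¹))) := by simp only [mul_assoc]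
      _ = x * (t * (α.gen * t⁻¹)) := by rw [inv_mul_inv]
      _ = x * (t * α.gen * t⁻¹) := by simp only [mul_assoc]
      _ = x := hx
  rw [mul_inv_rev']
  calc x * t * (t⁻¹ * x⁻¹) = x * (t * t⁻¹) * x⁻¹ := by simp only [mul_assoc]
    _ = x * x⁻¹ := by rw [hxt]

end Aux

/-- Let `(K, η, T)` be a normal extension triple.  Then
`P^η_{K,T}` forms an inverse subsemigroup of `P_{K,T}`; the restriction of the
action of `T` on `P_{K,T}` to `P^η_{K,T}` is an action of `T` on `P^η_{K,T}`
satisfying axiom (AFR) (with `ε(α)` the unique idempotent generator of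
`dom α`); and consequently the full restricted semidirect product
`P^η_{K,T} ⋊ T` is an inverse subsemigroup of `K Wr^H T`. -/
theorem peta_gives_inverse_subsemigroup_of_houghton {K T : Type*}
    [InverseSemigroup K] [InverseSemigroup T]
    (η : K → T) (hη : IsSurjHomOntoE η) :
    -- `P^η_{K,T}` is an inverse subsemigroup of `P_{K,T}`
    (∀ α ∈ Peta η, ∀ β ∈ Peta η, PElem.pmul α β ∈ Peta η) ∧
    (∀ α ∈ Peta η, PElem.pinv α ∈ Peta η ∧
        PElem.pmul (PElem.pmul α (PElem.pinv α)) α = α ∧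
        PElem.pmul (PElem.pmul (PElem.pinv α) α) (PElem.pinv α)
          = PElem.pinv α) ∧
    -- the action of `T` on `P_{K,T}` restricts to `P^η_{K,T}`, and is an
    -- action by endomorphisms there
    (∀ (t : T), ∀ α ∈ Peta η, PElem.pact t α ∈ Peta η) ∧
    (∀ (t : T), ∀ α ∈ Peta η, ∀ β ∈ Peta η,
        PElem.pact t (PElem.pmul α β) =
          PElem.pmul (PElem.pact t α) (PElem.pact t β)) ∧
    (∀ (t u : T), ∀ α ∈ Peta η,
        PElem.pact (t * u) α = PElem.pact t (PElem.pact u α)) ∧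
    -- `ε = PElem.gen` restricted to `P^η_{K,T}` is a surjective homomorphism
    -- onto `E(T)` and satisfies (AFR)
    (∀ α ∈ Peta η, ∀ β ∈ Peta η,
        (PElem.pmul α β).gen = α.gen * β.gen ∧ α.gen ∈ idemSet T) ∧
    (∀ e ∈ idemSet T, ∃ α ∈ Peta η, α.gen = e) ∧
    (∀ α ∈ Peta η, ∀ e ∈ idemSet T, (PElem.pact e α = α ↔ nle α.gen e)) ∧
    -- consequently `P^η_{K,T} ⋊ T` is an inverse subsemigroup of `K Wr^H T`
    (hwrEtaSet η ⊆ hwrSet K T) ∧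
    (∀ p ∈ hwrEtaSet η, ∀ q ∈ hwrEtaSet η, hwrMul p q ∈ hwrEtaSet η) ∧
    (∀ p ∈ hwrEtaSet η, ∃ q ∈ hwrEtaSet η,
        hwrMul (hwrMul p q) p = p ∧ hwrMul (hwrMul q p) q = q) := by
  open InverseSemigroup in
  -- AFR, stated once and reused
  have afr : ∀ (α : PElem K T), ∀ e ∈ idemSet T,
      (PElem.pact e α = α ↔ nle α.gen e) := by
    intro α e he
    constructor
    · intro h
      have hgen : e * α.gen * e⁻¹ = α.gen := congrArg PElem.gen h
      rw [idem_inv he, idem_comm he α.idem, mul_assoc, he] at hgen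
      exact ⟨α.gen, α.idem, hgen.symm⟩
    · rintro ⟨f, hf, hfe⟩
      have hge : α.gen * e = α.gen := by
        rw [hfe, mul_assoc, he]
      exact pact_fix he hge
  refine ⟨fun α hα β hβ => peta_pmul hη hα hβ,
    fun α hα => ⟨peta_pinv hη hα, pmul_pinv_self α, pinv_pmul_self α⟩,
    fun t α hα => peta_pact hη t hα,
    fun t α _ β _ => pact_pmul t α β,
    fun t u α _ => pact_mul t u α,
    fun α _ β _ => ⟨rfl, α.idem⟩,
    ?_, fun α _ => afr α, ?_, ?_, ?_⟩
  · -- surjectivity of `gen` onto `E(T)`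
    intro e he
    refine ⟨⟨e, he, fun x => Classical.choose (hη.2.2 (iran x.1) (ran_idem x.1))⟩,
      fun x => Classical.choose_spec (hη.2.2 (iran x.1) (ran_idem x.1)), rfl⟩
  · -- `hwrEtaSet ⊆ hwrSet`
    rintro ⟨α, t⟩ ⟨hα, hgen⟩
    ext x
    simp only [Set.mem_setOf_eq, lIdeal]
    constructor
    · intro hx
      refine ⟨x * t, ?_⟩
      rw [hgen] at hx
      calc x = x * (t * t⁻¹) := hx.symm
        _ = x * t * t⁻¹ := by rw [mul_assoc]
    · rintro ⟨y, rfl⟩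
      rw [hgen]
      show y * t⁻¹ * (t * t⁻¹) = y * t⁻¹
      calc y * t⁻¹ * (t * t⁻¹) = y * (t⁻¹ * t * t⁻¹) := by simp only [mul_assoc]
        _ = y * t⁻¹ := by rw [inv_mul_inv]
  · -- closure under multiplication
    rintro ⟨α, t⟩ ⟨hα, hgα⟩ ⟨β, u⟩ ⟨hβ, hgβ⟩
    refine ⟨peta_pmul hη hα (peta_pact hη t hβ), ?_⟩
    show α.gen * (t * β.gen * t⁻¹) = iran (t * u)
    rw [hgα, hgβ]
    show t * t⁻¹ * (t * (u * u⁻¹) * t⁻¹) = (t * u) * (t * u)⁻¹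
    rw [mul_inv_rev']
    calc t * t⁻¹ * (t * (u * u⁻¹) * t⁻¹)
        = t * t⁻¹ * t * (u * u⁻¹ * t⁻¹) := by simp only [mul_assoc]
      _ = t * (u * (u⁻¹ * t⁻¹)) := by rw [mul_inv_mul]; simp only [mul_assoc]
      _ = t * u * (u⁻¹ * t⁻¹) := by simp only [mul_assoc]
  · -- existence of inverses
    rintro ⟨α, t⟩ ⟨hα, hgα⟩
    refine ⟨(PElem.pact t⁻¹ (PElem.pinv α), t⁻¹),
      ⟨peta_pact hη t⁻¹ (peta_pinv hη hα), ?_⟩, ?_, ?_⟩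
    · show t⁻¹ * α.gen * t⁻¹⁻¹ = iran t⁻¹
      rw [hgα, inv_inv']
      show t⁻¹ * (t * t⁻¹) * t = t⁻¹ * t⁻¹⁻¹
      rw [inv_inv']
      calc t⁻¹ * (t * t⁻¹) * t = t⁻¹ * (t * t⁻¹ * t) := by simp only [mul_assoc]
        _ = t⁻¹ * t := by rw [mul_inv_mul]
    · -- (pq)p = p
      have hfix : ∀ γ : PElem K T, γ.gen = α.gen → PElem.pact (t * t⁻¹) γ = γ := by
        intro γ hγ
        exact pact_fix (ran_idem t) (by rw [hγ, hgα]; exact ran_idem t)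
      show (PElem.pmul (PElem.pmul α (PElem.pact t (PElem.pact t⁻¹ (PElem.pinv α))))
          (PElem.pact (t * t⁻¹) α), t * t⁻¹ * t) = (α, t)
      rw [← pact_mul, hfix (PElem.pinv α) rfl, hfix α rfl,
        pmul_pinv_self, mul_inv_mul]
    · -- (qp)q = q
      have hfixd : PElem.pact (t⁻¹ * t * t⁻¹) (PElem.pinv α)
          = PElem.pact t⁻¹ (PElem.pinv α) := by rw [inv_mul_inv]
      show (PElem.pmul (PElem.pmul (PElem.pact t⁻¹ (PElem.pinv α)) (PElem.pact t⁻¹ α))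
          (PElem.pact (t⁻¹ * t) (PElem.pact t⁻¹ (PElem.pinv α))), t⁻¹ * t * t⁻¹)
        = (PElem.pact t⁻¹ (PElem.pinv α), t⁻¹)
      rw [← pact_mul, hfixd, ← pact_pmul, ← pact_pmul, pinv_pmul_self, inv_mul_inv]
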